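/- arXiv:1606.09073 — 3 statements merged into one kernel-verified Lean document; each statement's English description precedes it below -/
import Mathlib

section
/- If z_1, ..., z_d are the roots (with multiplicity) in an algebraic closure of F_q of an affine p-polynomial ℓ(x) = L(x) - α of degree d = p^h, where L is a separable linearized polynomial over F_q (all exponents of nonzero monomials are powers of p = char(F_q)) and α ∈ F_q, then the power sums π_i = z_1^i + ... + z_d^i vanish for all i = 1, ..., d-2. -/
/-!
By Vieta, for `1 ≤ m ≤ d - 2` the `m`-th elementary symmetric function `e_m` of the roots is, up
to sign, the coefficient of `x ^ (d - m)` in `ℓ`, hence in `L` since `d - m ≥ 2`. It vanishes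
unless `d - m = p ^ k` with `k ≥ 1`, and then `p ∣ m`. Either way `m e_m = 0`, so Newton's
identities `π_m = ± m e_m + ∑_{0<a<m} ± e_a π_{m-a}` kill `π_1, …, π_{d-2}` one after the other.
-/

open Polynomial Finset

namespace MvPolynomial

variable {σ R : Type*} [Fintype σ] [CommRing R]

theorem eval_psum_eq_zero_of_cast_mul_eval_esymm_eq_zero (x : σ → R) {n : ℕ}
    (h : ∀ m, 1 ≤ m → m ≤ n → (m : R) * eval x (esymm σ R m) = 0) {m : ℕ} (hm : 1 ≤ m)
    (hmn : m ≤ n) : eval x (psum σ R m) = 0 := by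
  induction m using Nat.strong_induction_on with
  | _ m ih =>
    rw [psum_eq_mul_esymm_sub_sum σ R m hm, map_sub, map_mul, map_mul, map_natCast, mul_assoc,
      h m hm hmn, mul_zero, zero_sub, neg_eq_zero, map_sum]
    refine sum_eq_zero fun a ha => ?_
    simp only [mem_filter, HasAntidiagonal.mem_antidiagonal, Set.mem_Ioo] at ha
    rw [map_mul, ih a.2 (by omega) (by omega) (by omega), mul_zero]

theorem coeff_prod_X_sub_C_card_sub (x : σ → R) {m : ℕ} (hm : m ≤ Fintype.card σ) :
    (∏ j, (Polynomial.X - Polynomial.C (x j))).coeff (Fintype.card σ - m) =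
      (-1) ^ m * eval x (esymm σ R m) := by
  have hcard : Multiset.card (univ.val.map x) = Fintype.card σ := by simp
  have hesymm : eval x (esymm σ R m) = (univ.val.map x).esymm m :=
    aeval_esymm_eq_multiset_esymm σ R m x
  have hvieta := (univ.val.map x).prod_X_sub_C_coeff (k := Fintype.card σ - m) (by omega)
  rw [Multiset.map_map, hcard, Nat.sub_sub_self hm] at hvieta
  rwa [hesymm, prod_eq_multiset_prod]

end MvPolynomial

theorem Polynomial.cast_mul_coeff_pow_sub_eq_zero {R : Type*} [Semiring R] (p : ℕ)
    [CharP R p] {L : R[X]} (hlin : ∀ n, L.coeff n ≠ 0 → ∃ k, n = p ^ k) {h m : ℕ}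
    (hm : m + 2 ≤ p ^ h) : (m : R) * L.coeff (p ^ h - m) = 0 := by
  by_contra hne
  obtain ⟨k, hk⟩ := hlin _ (right_ne_zero_of_mul hne)
  have hk0 : k ≠ 0 := by rintro rfl; simp at hk; omega
  have hh0 : h ≠ 0 := by rintro rfl; simp at hm
  have hpm : p ∣ m := by
    rw [show m = p ^ h - p ^ k by omega]
    exact Nat.dvd_sub (dvd_pow_self p hh0) (dvd_pow_self p hk0)
  rw [(CharP.cast_eq_zero_iff R p m).mpr hpm, zero_mul] at hne
  exact hne rfl

theorem sum_pow_eq_zero_of_cast_mul_coeff_prod_X_sub_C_eq_zero {σ R : Type*} [Fintype σ]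
    [CommRing R] (x : σ → R) {n : ℕ} (hn : n ≤ Fintype.card σ)
    (h : ∀ m, 1 ≤ m → m ≤ n → (m : R) * (∏ j, (X - C (x j))).coeff (Fintype.card σ - m) = 0)
    {m : ℕ} (hm : 1 ≤ m) (hmn : m ≤ n) : ∑ j, x j ^ m = 0 := by
  have hpsum := MvPolynomial.eval_psum_eq_zero_of_cast_mul_eval_esymm_eq_zero x (n := n)
    (fun k hk hkn => ?_) hm hmn
  · simpa [MvPolynomial.psum] using hpsum
  · have hcoeff := h k hk hkn
    rw [MvPolynomial.coeff_prod_X_sub_C_card_sub x (by omega), mul_left_comm] at hcoeff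
    exact ((isUnit_neg_one (α := R)).pow k).mul_right_eq_zero.mp hcoeff

theorem power_sums_of_affine_p_polynomial_roots_vanish_general
    (F : Type*) [Field F]
    (p h : ℕ) (hp : p = ringChar F)
    (L : Polynomial F)
    (hlin : ∀ n : ℕ, L.coeff n ≠ 0 → ∃ k : ℕ, n = p ^ k)
    (d : ℕ) (hd : d = p ^ h)
    (α : F) (z : Fin d → AlgebraicClosure F)
    (hz : (L - C α).map (algebraMap F (AlgebraicClosure F)) =
      ∏ j : Fin d, (X - C (z j))) :
    ∀ i : ℕ, 1 ≤ i → i ≤ d - 2 → ∑ j : Fin d, z j ^ i = 0 := by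
  intro i hi hid
  have : CharP F p := hp ▸ ringChar.charP F
  refine sum_pow_eq_zero_of_cast_mul_coeff_prod_X_sub_C_eq_zero z (n := d - 2) (by simp)
    (fun m hm hmd => ?_) hi hid
  subst hd
  rw [← hz, Fintype.card_fin, coeff_map, coeff_sub, coeff_C, if_neg (by omega), sub_zero,
    ← map_natCast (algebraMap F _), ← map_mul,
    Polynomial.cast_mul_coeff_pow_sub_eq_zero p hlin (by omega), map_zero]

/-- Power sums of the roots of a separable affine p-polynomial vanish up to degree d-2. -/
theorem power_sums_of_affine_p_polynomial_roots_vanish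
    (F : Type*) [Field F] [Fintype F]
    (p h : ℕ) (hp : p = ringChar F)
    (L : Polynomial F)
    (hlin : ∀ n : ℕ, L.coeff n ≠ 0 → ∃ k : ℕ, n = p ^ k)
    (hsep : L.Separable)
    (d : ℕ) (hd : d = p ^ h) (hdeg : L.natDegree = d)
    (α : F) (z : Fin d → AlgebraicClosure F)
    (hz : (L - C α).map (algebraMap F (AlgebraicClosure F)) =
      ∏ j : Fin d, (X - C (z j))) :
    ∀ i : ℕ, 1 ≤ i → i ≤ d - 2 → ∑ j : Fin d, z j ^ i = 0 :=
  power_sums_of_affine_p_polynomial_roots_vanish_general F p h hp L hlin d hd α z hz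
end

section
/- Let C be an [n,k,d] linear code over F_q with all-symbol locality r (every coordinate i has a recovering set R(i) of size r not containing i such that any codeword coordinate x_i is determined by x restricted to R(i)). Then ⌈k/r⌉ ≤ n - k - d + 2. -/
set_option synthInstance.maxHeartbeats 1000000

namespace LRCAux

variable {F : Type*} [Field F] {n : ℕ}

/-- The subcode of `C` vanishing on the coordinate set `S`. -/
def Csub (C : Submodule F (Fin n → F)) (S : Finset (Fin n)) : Submodule F (Fin n → F) where
  carrier := {x | x ∈ C ∧ ∀ j ∈ S, x j = 0}
  add_mem' := fun {a b} ha hb => ⟨C.add_mem ha.1 hb.1,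
    fun j hj => by simp [Pi.add_apply, ha.2 j hj, hb.2 j hj]⟩
  zero_mem' := ⟨C.zero_mem, fun j _ => rfl⟩
  smul_mem' := fun c {a} ha => ⟨C.smul_mem c ha.1, fun j hj => by
    simp [Pi.smul_apply, ha.2 j hj]⟩

lemma mem_Csub {C : Submodule F (Fin n → F)} {S : Finset (Fin n)} {x : Fin n → F} :
    x ∈ Csub C S ↔ x ∈ C ∧ ∀ j ∈ S, x j = 0 := Iff.rfl

lemma Csub_anti {C : Submodule F (Fin n → F)} {S T : Finset (Fin n)} (h : S ⊆ T) :
    Csub C T ≤ Csub C S := fun x hx => ⟨hx.1, fun j hj => hx.2 j (h hj)⟩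

lemma Csub_empty (C : Submodule F (Fin n → F)) : Csub C ∅ = C := by
  ext x; simp [mem_Csub]

/-- dimension drops by at most 1 when one coordinate is added. -/
lemma finrank_le_insert (C : Submodule F (Fin n → F)) (S : Finset (Fin n)) (i : Fin n) :
    Module.finrank F (Csub C S) ≤ Module.finrank F (Csub C (insert i S)) + 1 := by
  classical
  set f : Csub C S →ₗ[F] F := (LinearMap.proj i).comp (Csub C S).subtype with hf
  have hker : LinearMap.ker f = Submodule.comap (Csub C S).subtype (Csub C (insert i S)) := by
    ext x
    simp only [LinearMap.mem_ker, hf, LinearMap.comp_apply, LinearMap.proj_apply,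
      Submodule.coe_subtype, Submodule.mem_comap, mem_Csub]
    constructor
    · intro h
      exact ⟨x.2.1, fun j hj => by
        rcases Finset.mem_insert.1 hj with rfl | hj
        · exact h
        · exact x.2.2 j hj⟩
    · intro h
      exact h.2 i (Finset.mem_insert_self i S)
  have hle : Csub C (insert i S) ≤ Csub C S := Csub_anti (Finset.subset_insert i S)
  have e := Submodule.comapSubtypeEquivOfLe hle
  have h1 : Module.finrank F (LinearMap.ker f) = Module.finrank F (Csub C (insert i S)) := by
    rw [hker]; exact e.finrank_eq
  have h2 := LinearMap.finrank_range_add_finrank_ker f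
  have h3 : Module.finrank F (LinearMap.range f) ≤ 1 := by
    simpa using (LinearMap.range f).finrank_le
  omega

lemma finrank_le_union (C : Submodule F (Fin n → F)) (S T : Finset (Fin n)) :
    Module.finrank F (Csub C S) ≤ Module.finrank F (Csub C (S ∪ T)) + T.card := by
  classical
  induction T using Finset.induction_on with
  | empty => rw [Finset.union_empty]; simp
  | @insert a T ha ih =>
    have h1 := finrank_le_insert C (S ∪ T) a
    rw [Finset.union_insert]
    rw [Finset.card_insert_of_notMem ha]
    omega

lemma finrank_lt_of_ne_zero {C : Submodule F (Fin n → F)} {S : Finset (Fin n)} {x : Fin n → F}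
    (hx : x ∈ Csub C S) {i : Fin n} (hxi : x i ≠ 0) :
    Module.finrank F (Csub C (insert i S)) < Module.finrank F (Csub C S) := by
  apply Submodule.finrank_lt_finrank_of_lt
  refine lt_of_le_of_ne (Csub_anti (Finset.subset_insert i S)) ?_
  intro h
  have : x ∈ Csub C (insert i S) := h ▸ hx
  exact hxi (this.2 i (Finset.mem_insert_self i S))

lemma exists_ne_zero_of_finrank_pos {C : Submodule F (Fin n → F)} {S : Finset (Fin n)}
    (h : 0 < Module.finrank F (Csub C S)) : ∃ x ∈ Csub C S, x ≠ 0 := by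
  have : Nontrivial (Csub C S) := Module.nontrivial_of_finrank_pos h
  obtain ⟨x, hx⟩ := exists_ne (0 : Csub C S)
  exact ⟨x.1, x.2, fun h0 => hx (Subtype.ext h0)⟩


/-- Trimming: if the dimension drops to 0 after adding `T`, we can add part of `T`
to reach dimension exactly 1, gaining at least one coordinate per lost dimension. -/
lemma trim (C : Submodule F (Fin n → F)) :
    ∀ T : Finset (Fin n), ∀ S : Finset (Fin n),
      1 ≤ Module.finrank F (Csub C S) → Module.finrank F (Csub C (S ∪ T)) = 0 →
      ∃ S', S ⊆ S' ∧ Module.finrank F (Csub C S') = 1 ∧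
        S.card + Module.finrank F (Csub C S) ≤ S'.card + 1 := by
  classical
  intro T
  induction T using Finset.induction_on with
  | empty =>
    intro S h1 h0
    rw [Finset.union_empty] at h0
    omega
  | @insert a T ha ih =>
    intro S h1 h0
    rcases eq_or_lt_of_le h1 with heq | h2
    · exact ⟨S, Finset.Subset.refl S, heq.symm, by omega⟩
    · have hins : insert a S ∪ T = S ∪ insert a T := by
        rw [Finset.insert_union, Finset.union_insert]
      have hd : Module.finrank F (Csub C S) ≤ Module.finrank F (Csub C (insert a S)) + 1 :=
        finrank_le_insert C S a
      have h1' : 1 ≤ Module.finrank F (Csub C (insert a S)) := by omega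
      have h0' : Module.finrank F (Csub C (insert a S ∪ T)) = 0 := by rw [hins]; exact h0
      obtain ⟨S', hSS', hS'1, hS'c⟩ := ih (insert a S) h1' h0'
      refine ⟨S', (Finset.subset_insert a S).trans hSS', hS'1, ?_⟩
      by_cases haS : a ∈ S
      · rw [Finset.insert_eq_self.2 haS] at hS'c
        omega
      · rw [Finset.card_insert_of_notMem haS] at hS'c
        omega

/-- Main greedy construction. -/
lemma main (C : Submodule F (Fin n → F)) (r : ℕ) (hr : 0 < r)
    (hloc' : ∀ i : Fin n, ∃ R : Finset (Fin n), i ∉ R ∧ R.card = r ∧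
      ∀ x ∈ C, (∀ j ∈ R, x j = 0) → x i = 0) :
    ∀ m : ℕ, ∀ S : Finset (Fin n), Module.finrank F (Csub C S) = m → 1 ≤ m →
      ∃ S', S ⊆ S' ∧ Module.finrank F (Csub C S') = 1 ∧
        S.card + (m - 1) + (m - 1) / r ≤ S'.card := by
  classical
  intro m
  induction m using Nat.strong_induction_on with
  | _ m ih =>
    intro S hm h1
    rcases eq_or_lt_of_le h1 with heq | h2
    · exact ⟨S, Finset.Subset.refl S, by omega, by simp [← heq]⟩
    -- m ≥ 2 : pick a nonzero codeword in Csub C S and a coordinate where it is nonzero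
    obtain ⟨x, hxS, hx0⟩ := exists_ne_zero_of_finrank_pos (C := C) (S := S) (by omega)
    obtain ⟨i, hxi⟩ : ∃ i, x i ≠ 0 := by
      by_contra h
      push_neg at h
      exact hx0 (funext h)
    obtain ⟨R, hiR, hRcard, hRrec⟩ := hloc' i
    have hiS : i ∉ S := fun h => hxi (hxS.2 i h)
    -- locality: adding i on top of S ∪ R does not change the subcode
    have hkey : Csub C (insert i (S ∪ R)) = Csub C (S ∪ R) := by
      apply le_antisymm (Csub_anti (Finset.subset_insert _ _))
      intro y hy
      refine ⟨hy.1, fun j hj => ?_⟩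
      rcases Finset.mem_insert.1 hj with rfl | hj
      · exact hRrec y hy.1 (fun j' hj' => hy.2 j' (Finset.mem_union_right S hj'))
      · exact hy.2 j hj
    set m₁ := Module.finrank F (Csub C (S ∪ R)) with hm₁
    -- dimension bounds
    have hdropR : m ≤ m₁ + (R \ S).card := by
      have := finrank_le_union C S (R \ S)
      rw [Finset.union_sdiff_self_eq_union] at this
      omega
    have hRS : (R \ S).card ≤ r := by
      calc (R \ S).card ≤ R.card := Finset.card_le_card (Finset.sdiff_subset)
      _ = r := hRcard
    have hstrict : m₁ < m := by
      have h3 : Module.finrank F (Csub C (insert i S)) < m := hm ▸ finrank_lt_of_ne_zero hxS hxi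
      have h4 : Csub C (insert i (S ∪ R)) ≤ Csub C (insert i S) := by
        apply Csub_anti
        intro j hj
        rcases Finset.mem_insert.1 hj with rfl | hj
        · exact Finset.mem_insert_self _ _
        · exact Finset.mem_insert_of_mem (Finset.mem_union_left R hj)
      have h5 : m₁ ≤ Module.finrank F (Csub C (insert i S)) := by
        rw [hm₁, ← hkey]
        exact Submodule.finrank_mono h4
      omega
    have hcardSR : (S ∪ R).card = S.card + (R \ S).card := by
      rw [← Finset.union_sdiff_self_eq_union (s := S) (t := R)]
      exact Finset.card_union_of_disjoint Finset.disjoint_sdiff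
    by_cases hm₁0 : m₁ = 0
    -- case: dimension would collapse to 0; trim inside insert i R
    · have hmr : m ≤ r := by omega
      have h0 : Module.finrank F (Csub C (S ∪ insert i R)) = 0 := by
        have : S ∪ insert i R = insert i (S ∪ R) := by
          rw [Finset.union_insert]
        rw [this, hkey]
        omega
      obtain ⟨S', hSS', hS'1, hS'c⟩ := trim C (insert i R) S (by omega) h0
      refine ⟨S', hSS', hS'1, ?_⟩
      have : (m - 1) / r = 0 := Nat.div_eq_of_lt (by omega)
      omega
    -- case: recurse
    · have h1' : 1 ≤ m₁ := by omega
      obtain ⟨S', hSS', hS'1, hS'c⟩ := ih m₁ hstrict (insert i (S ∪ R)) (hkey ▸ hm₁) h1'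
      refine ⟨S', ((Finset.subset_union_left).trans (Finset.subset_insert _ _)).trans hSS',
        hS'1, ?_⟩
      have hci : (insert i (S ∪ R)).card = (S ∪ R).card + 1 := by
        rw [Finset.card_insert_of_notMem]
        simp [hiS, hiR]
      -- floor division step inequality: (m-1)/r ≤ (m₁-1)/r + 1
      have hdivle : (m - 1) / r ≤ (m₁ - 1) / r + 1 := by
        have hle : m - 1 ≤ (m₁ - 1) + r := by omega
        calc (m - 1) / r ≤ ((m₁ - 1) + r) / r := Nat.div_le_div_right hle
          _ = (m₁ - 1) / r + 1 := Nat.add_div_right _ hr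
      omega

end LRCAux


open LRCAux

/-- The Singleton-like bound for locally recoverable codes:
`⌈k/r⌉ ≤ n - k - d + 2` for an `[n,k,d]` linear code with all-symbol locality `r`. -/
theorem lrc_singleton_like_bound
    (F : Type*) [Field F] [Fintype F] [DecidableEq F]
    (n k d r : ℕ) (hr : 0 < r)
    (C : Submodule F (Fin n → F))
    (hk : Module.finrank F C = k)
    (hd : IsLeast {w : ℕ | ∃ x ∈ C, x ≠ 0 ∧ w = hammingNorm x} d)
    (hloc : ∀ i : Fin n, ∃ R : Finset (Fin n), i ∉ R ∧ R.card = r ∧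
      ∀ x ∈ C, ∀ y ∈ C, (∀ j ∈ R, x j = y j) → x i = y i) :
    ⌈(k : ℚ) / (r : ℚ)⌉ ≤ (n : ℤ) - k - d + 2 := by
  classical
  -- the one-sided version of locality (comparing with the zero codeword)
  have hloc' : ∀ i : Fin n, ∃ R : Finset (Fin n), i ∉ R ∧ R.card = r ∧
      ∀ x ∈ C, (∀ j ∈ R, x j = 0) → x i = 0 := by
    intro i
    obtain ⟨R, h1, h2, h3⟩ := hloc i
    refine ⟨R, h1, h2, fun x hx hxR => ?_⟩
    have := h3 x hx 0 C.zero_mem (fun j hj => by simpa using hxR j hj)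
    simpa using this
  -- k ≥ 1
  obtain ⟨z, hzC, hz0, hzw⟩ := hd.1
  have hk1 : 1 ≤ k := by
    rcases Nat.eq_zero_or_pos k with h0 | h
    · exfalso
      rw [h0] at hk
      have : C = ⊥ := Submodule.finrank_eq_zero.1 hk
      rw [this] at hzC
      exact hz0 (Submodule.mem_bot F |>.1 hzC)
    · exact h
  -- greedy construction from the empty set
  have hD : Module.finrank F (Csub C ∅) = k := by rw [Csub_empty]; exact hk
  obtain ⟨S', _, hS'1, hS'c⟩ := main C r hr hloc' k ∅ hD hk1
  rw [Finset.card_empty] at hS'c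
  -- a nonzero codeword vanishing on S'
  obtain ⟨y, hyS', hy0⟩ := exists_ne_zero_of_finrank_pos (C := C) (S := S') (by omega)
  have hdy : d ≤ hammingNorm y := hd.2 ⟨y, hyS'.1, hy0, rfl⟩
  -- weight bound: hammingNorm y + S'.card ≤ n
  have hwt : hammingNorm y + S'.card ≤ n := by
    have hdisj : Disjoint ({i | y i ≠ 0} : Finset (Fin n)) S' := by
      rw [Finset.disjoint_left]
      intro a ha haS'
      exact (Finset.mem_filter.1 ha).2 (hyS'.2 a haS')
    calc hammingNorm y + S'.card
        = (({i | y i ≠ 0} : Finset (Fin n)) ∪ S').card :=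
          (Finset.card_union_of_disjoint hdisj).symm
      _ ≤ (Finset.univ : Finset (Fin n)).card := Finset.card_le_card (Finset.subset_univ _)
      _ = n := by simp
  have hmain : d + (k - 1) + (k - 1) / r ≤ n := by omega
  -- convert to the ceiling statement
  have hceil : ⌈(k : ℚ) / (r : ℚ)⌉ ≤ ((k - 1) / r : ℕ) + 1 := by
    rw [Int.ceil_le]
    rw [div_le_iff₀ (by exact_mod_cast hr)]
    have hnat : k ≤ r * ((k - 1) / r) + r := by
      have h := Nat.div_add_mod (k - 1) r
      have h2 := Nat.mod_lt (k - 1) hr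
      omega
    push_cast
    calc (k : ℚ) ≤ ((r * ((k - 1) / r) + r : ℕ) : ℚ) := by exact_mod_cast hnat
      _ = (((k - 1) / r : ℕ) + 1) * r := by push_cast; ring
  have : (((k - 1) / r : ℕ) : ℤ) + 1 ≤ (n : ℤ) - k - d + 2 := by
    push_cast
    omega
  omega
end

section
/- Let q be a prime power, m ≥ 1, and f ∈ F_q[x_1,...,x_m] a nonzero polynomial of total degree ≤ l with l ≤ q - 1 and degree ≤ q - 1 in each variable. Write (q-1)m - l = θ(q-1) + μ with 0 ≤ μ < q - 1. Then f has at most q^m - (μ+1)q^θ zeros in F_q^m. -/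
open MvPolynomial

/-!
Since `l ≤ q - 1`, the division of `(q - 1)m - l` by `q - 1` is explicit: `θ = m - 1` and
`μ = q - 1 - l` when `l ≥ 1`, and `θ = m`, `μ = 0` when `l = 0`. In both cases
`q^m - (μ + 1)q^θ = l q^(m-1)`, so the bound is the Schwartz–Zippel bound for the whole of `F_q^m`.
-/

theorem MvPolynomial.card_zeros_mul_card_le_totalDegree_mul {R : Type*} [CommRing R] [IsDomain R]
    [Fintype R] {n : ℕ} {p : MvPolynomial (Fin n) R} (hp : p ≠ 0) :
    Nat.card {x : Fin n → R // eval x p = 0} * Fintype.card R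
      ≤ p.totalDegree * Fintype.card R ^ n := by
  classical
  have hR : (0 : ℚ≥0) < Fintype.card R := by exact_mod_cast Fintype.card_pos
  have h := schwartz_zippel_totalDegree hp Finset.univ
  rw [Fintype.piFinset_univ, Finset.card_univ, div_le_div_iff₀ (by positivity) hR] at h
  rw [Nat.card_eq_fintype_card, Fintype.card_subtype]
  exact_mod_cast h

theorem Nat.eq_and_eq_of_mul_add_eq_mul_add {a k r k' r' : ℕ} (hr : r < a) (hr' : r' < a)
    (h : a * k + r = a * k' + r') : k = k' ∧ r = r' := by
  have ha : 0 < a := by omega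
  constructor
  · simpa [Nat.mul_add_div ha, Nat.div_eq_of_lt hr, Nat.div_eq_of_lt hr'] using congrArg (· / a) h
  · simpa [Nat.mul_add_mod, Nat.mod_eq_of_lt hr, Nat.mod_eq_of_lt hr'] using congrArg (· % a) h

theorem Nat.pow_succ_sub_mul_pow_eq {q n l θ μ : ℕ} (hl : l ≤ q - 1) (hμ : μ < q - 1)
    (h : (q - 1) * (n + 1) - l = θ * (q - 1) + μ) :
    q ^ (n + 1) - (μ + 1) * q ^ θ = l * q ^ n := by
  rw [mul_comm θ] at h
  rcases Nat.eq_zero_or_pos l with rfl | hl₀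
  · obtain ⟨rfl, rfl⟩ : n + 1 = θ ∧ 0 = μ :=
      Nat.eq_and_eq_of_mul_add_eq_mul_add (by omega) hμ (by simpa using h)
    simp
  · obtain ⟨rfl, rfl⟩ : n = θ ∧ q - 1 - l = μ := by
      refine Nat.eq_and_eq_of_mul_add_eq_mul_add (by omega) hμ ?_
      rw [← h, mul_add_one]
      omega
    rw [show q - 1 - l + 1 = q - l by omega, pow_succ', ← Nat.sub_mul, Nat.sub_sub_self (by omega)]

theorem reed_muller_zero_bound_general
    (F : Type*) [Field F] [Fintype F]
    (q m l θ μ : ℕ) (hq : q = Fintype.card F)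
    (hm : 1 ≤ m) (hl : l ≤ q - 1) (hμ : μ < q - 1)
    (hdecomp : (q - 1) * m - l = θ * (q - 1) + μ)
    (f : MvPolynomial (Fin m) F) (hf : f ≠ 0)
    (hdeg : f.totalDegree ≤ l) :
    Nat.card {x : Fin m → F // eval x f = 0} ≤ q ^ m - (μ + 1) * q ^ θ := by
  obtain ⟨n, rfl⟩ : ∃ n, m = n + 1 := ⟨m - 1, by omega⟩
  rw [Nat.pow_succ_sub_mul_pow_eq hl hμ hdecomp]
  refine Nat.le_of_mul_le_mul_right ?_ (by omega : 0 < q)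
  calc Nat.card {x : Fin (n + 1) → F // eval x f = 0} * q
      ≤ f.totalDegree * q ^ (n + 1) := hq ▸ card_zeros_mul_card_le_totalDegree_mul hf
    _ ≤ l * q ^ (n + 1) := by gcongr
    _ = l * q ^ n * q := by ring

/-- The Reed–Muller minimum-distance bound: a nonzero reduced polynomial of total
degree `≤ l ≤ q-1` in `m` variables has at most `q^m - (μ+1)q^θ` zeros in `F_q^m`,
where `(q-1)m - l = θ(q-1) + μ` with `0 ≤ μ < q-1`. -/
theorem reed_muller_zero_bound
    (F : Type*) [Field F] [Fintype F]
    (q m l θ μ : ℕ) (hq : q = Fintype.card F)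
    (hm : 1 ≤ m) (hl : l ≤ q - 1) (hμ : μ < q - 1)
    (hdecomp : (q - 1) * m - l = θ * (q - 1) + μ)
    (f : MvPolynomial (Fin m) F) (hf : f ≠ 0)
    (hdeg : f.totalDegree ≤ l)
    (hred : ∀ i : Fin m, f.degreeOf i ≤ q - 1) :
    Nat.card {x : Fin m → F // eval x f = 0} ≤ q ^ m - (μ + 1) * q ^ θ :=
  reed_muller_zero_bound_general F q m l θ μ hq hm hl hμ hdecomp f hf hdeg
end
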